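/- arXiv:2505.23112 — 2 statements merged into one kernel-verified Lean document; each statement's English description precedes it below -/
import Mathlib

section
/- Let d1 > 0, d2 > 0, y⋆ > 0 with d1·d2 < 1/(4·y⋆²), KP ≥ 0, KI > 0, u0 ∈ ℝ, r := (1/2)·√(1 - 4·d1·d2·y⋆²), and let χ̄^u be the minimal-current equilibrium of the PI closed-loop vector field f. Then the constant coefficient a0 of the characteristic polynomial λ³ + a2·λ² + a1·λ + a0 of the Jacobian ∇f(χ̄^u) equals -2·KI·r < 0; equivalently det ∇f(χ̄^u) = 2·KI·r. -/
/-!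
Expanding along its last row `(0, -1, 0)`, the Jacobian of the PI closed loop at `χ` has
determinant `KI · (u(χ) χ₂ - d1 χ₁)`. At an equilibrium with `χ₂ = y⋆` the first component of `f`
vanishes, i.e. `u · y⋆ = 1 - d1 χ₁`, so the determinant is `KI · (1 - 2 d1 χ₁)`, which equals
`2 KI r` for the minimal-current value of `χ₁`. In odd dimension the constant coefficient of the
characteristic polynomial is minus the determinant.
-/

lemma LinearMap.charpoly_coeff_zero_of_odd_finrank {R M : Type*} [CommRing R] [AddCommGroup M]
    [Module R M] [Module.Free R M] [Module.Finite R M] (f : M →ₗ[R] M)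
    (h : Odd (Module.finrank R M)) : f.charpoly.coeff 0 = -LinearMap.det f := by
  rw [LinearMap.det_eq_sign_charpoly_coeff, h.neg_one_pow, neg_one_mul, neg_neg]

noncomputable def Module.Basis.finThreeProd (R : Type*) [Semiring R] :
    Module.Basis (Fin 3) R (R × R × R) :=
  Module.Basis.ofEquivFun
    { toFun := fun p => ![p.1, p.2.1, p.2.2]
      invFun := fun v => (v 0, v 1, v 2)
      map_add' := fun p q => by ext i; fin_cases i <;> simp
      map_smul' := fun c p => by ext i; fin_cases i <;> simp
      left_inv := fun p => by simp
      right_inv := fun v => by ext i; fin_cases i <;> simp }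

namespace BoostPI

variable (d1 d2 ystar KP KI u0 : ℝ)

def input (χ : ℝ × ℝ × ℝ) : ℝ := u0 + KI * χ.2.2 + KP * (ystar - χ.2.1)

def field (χ : ℝ × ℝ × ℝ) : ℝ × ℝ × ℝ :=
  (-d1 * χ.1 + 1 - input ystar KP KI u0 χ * χ.2.1,
   -d2 * χ.2.1 + input ystar KP KI u0 χ * χ.1,
   ystar - χ.2.1)

def jacobian (χ : ℝ × ℝ × ℝ) : Matrix (Fin 3) (Fin 3) ℝ :=
  let u := input ystar KP KI u0 χ
  !![-d1, KP * χ.2.1 - u, -KI * χ.2.1;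
     u, -d2 - KP * χ.1, KI * χ.1;
     0, -1, 0]

lemma toMatrix_fderiv_field (χ : ℝ × ℝ × ℝ) :
    LinearMap.toMatrix (Module.Basis.finThreeProd ℝ) (Module.Basis.finThreeProd ℝ)
      (fderiv ℝ (field d1 d2 ystar KP KI u0) χ : ℝ × ℝ × ℝ →ₗ[ℝ] ℝ × ℝ × ℝ) =
      jacobian d1 d2 ystar KP KI u0 χ := by
  have hx1 : HasFDerivAt (fun χ : ℝ × ℝ × ℝ => χ.1) _ χ := hasFDerivAt_fst (𝕜 := ℝ)
  have hx2 : HasFDerivAt (fun χ : ℝ × ℝ × ℝ => χ.2.1) _ χ :=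
    (hasFDerivAt_fst (𝕜 := ℝ)).comp χ hasFDerivAt_snd
  have hx3 : HasFDerivAt (fun χ : ℝ × ℝ × ℝ => χ.2.2) _ χ :=
    (hasFDerivAt_snd (𝕜 := ℝ)).comp χ hasFDerivAt_snd
  have hu := ((hasFDerivAt_const u0 χ).add (hx3.const_mul KI)).add
    (((hasFDerivAt_const ystar χ).sub hx2).const_mul KP)
  have hf : HasFDerivAt (field d1 d2 ystar KP KI u0) _ χ :=
    (((hx1.const_mul (-d1)).add_const (1 : ℝ)).sub (hu.mul hx2)).prodMk
      (((hx2.const_mul (-d2)).add (hu.mul hx1)).prodMk ((hasFDerivAt_const ystar χ).sub hx2))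
  rw [hf.fderiv]
  ext i j
  fin_cases i <;> fin_cases j <;>
    simp [LinearMap.toMatrix_apply, Module.Basis.finThreeProd, jacobian, input] <;> ring

lemma det_jacobian (χ : ℝ × ℝ × ℝ) :
    (jacobian d1 d2 ystar KP KI u0 χ).det =
      KI * (input ystar KP KI u0 χ * χ.2.1 - d1 * χ.1) := by
  simp [jacobian, Matrix.det_fin_three]
  ring

-- The third coordinate is the one at which the first component of `field` vanishes.
variable {ystar KI} in
lemma det_jacobian_of_eq_setpoint (x1 : ℝ) (hy : ystar ≠ 0) (hKI : KI ≠ 0) :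
    (jacobian d1 d2 ystar KP KI u0
      (x1, ystar, (1 - d1 * x1 - u0 * ystar) / (KI * ystar))).det = KI * (1 - 2 * d1 * x1) := by
  rw [det_jacobian, input]
  field_simp
  ring

end BoostPI

theorem boost_pi_min_current_charpoly_coeff_general
    (d1 d2 ystar KP KI u0 : ℝ) (hd1 : 0 < d1) (hy : 0 < ystar)
    (hcond : d1 * d2 < 1 / (4 * ystar ^ 2)) (hKI : 0 < KI)
    (r : ℝ) (hr : r = (1 / 2) * Real.sqrt (1 - 4 * d1 * d2 * ystar ^ 2))
    (f : ℝ × ℝ × ℝ → ℝ × ℝ × ℝ)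
    (hf : ∀ χ : ℝ × ℝ × ℝ,
      f χ = (-d1 * χ.1 + 1 - (u0 + KI * χ.2.2 + KP * (ystar - χ.2.1)) * χ.2.1,
             -d2 * χ.2.1 + (u0 + KI * χ.2.2 + KP * (ystar - χ.2.1)) * χ.1,
             ystar - χ.2.1))
    (χu : ℝ × ℝ × ℝ)
    (hχu : χu = ((1 / (2 * d1)) * (1 - 2 * r), ystar,
      (1 - d1 * ((1 / (2 * d1)) * (1 - 2 * r)) - u0 * ystar) / (KI * ystar))) :
    (LinearMap.charpoly (((fderiv ℝ f χu : ℝ × ℝ × ℝ →L[ℝ] ℝ × ℝ × ℝ) :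
        ℝ × ℝ × ℝ →ₗ[ℝ] ℝ × ℝ × ℝ))).coeff 0 = -(2 * KI * r) ∧
    -(2 * KI * r) < 0 ∧
    LinearMap.det ((fderiv ℝ f χu : ℝ × ℝ × ℝ →L[ℝ] ℝ × ℝ × ℝ) :
        ℝ × ℝ × ℝ →ₗ[ℝ] ℝ × ℝ × ℝ) = 2 * KI * r := by
  have hr_pos : 0 < r := by
    have : 4 * d1 * d2 * ystar ^ 2 < 1 := by
      have := (lt_div_iff₀ (by positivity)).mp hcond
      linarith
    rw [hr]
    exact mul_pos one_half_pos (Real.sqrt_pos.mpr (by linarith))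
  obtain rfl : f = BoostPI.field d1 d2 ystar KP KI u0 := funext hf
  have hdet : LinearMap.det (fderiv ℝ (BoostPI.field d1 d2 ystar KP KI u0) χu :
      ℝ × ℝ × ℝ →ₗ[ℝ] ℝ × ℝ × ℝ) = 2 * KI * r := by
    rw [← LinearMap.det_toMatrix (Module.Basis.finThreeProd ℝ), BoostPI.toMatrix_fderiv_field, hχu,
      BoostPI.det_jacobian_of_eq_setpoint _ _ _ _ _ hy.ne' hKI.ne']
    field_simp
    ring
  have hodd : Odd (Module.finrank ℝ (ℝ × ℝ × ℝ)) := by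
    rw [Module.finrank_eq_card_basis (Module.Basis.finThreeProd ℝ), Fintype.card_fin]
    decide
  refine ⟨?_, neg_neg_of_pos (by positivity), hdet⟩
  rw [LinearMap.charpoly_coeff_zero_of_odd_finrank _ hodd, hdet]

/-- at the minimal-current equilibrium the constant coefficient of the
characteristic polynomial of the Jacobian equals -2·KI·r < 0; equivalently the
determinant of the Jacobian equals 2·KI·r. -/
theorem boost_pi_min_current_charpoly_coeff
    (d1 d2 ystar KP KI u0 : ℝ) (hd1 : 0 < d1) (hd2 : 0 < d2) (hy : 0 < ystar)
    (hcond : d1 * d2 < 1 / (4 * ystar ^ 2)) (hKP : 0 ≤ KP) (hKI : 0 < KI)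
    (r : ℝ) (hr : r = (1 / 2) * Real.sqrt (1 - 4 * d1 * d2 * ystar ^ 2))
    (f : ℝ × ℝ × ℝ → ℝ × ℝ × ℝ)
    (hf : ∀ χ : ℝ × ℝ × ℝ,
      f χ = (-d1 * χ.1 + 1 - (u0 + KI * χ.2.2 + KP * (ystar - χ.2.1)) * χ.2.1,
             -d2 * χ.2.1 + (u0 + KI * χ.2.2 + KP * (ystar - χ.2.1)) * χ.1,
             ystar - χ.2.1))
    (χu : ℝ × ℝ × ℝ)
    (hχu : χu = ((1 / (2 * d1)) * (1 - 2 * r), ystar,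
      (1 - d1 * ((1 / (2 * d1)) * (1 - 2 * r)) - u0 * ystar) / (KI * ystar))) :
    (LinearMap.charpoly (((fderiv ℝ f χu : ℝ × ℝ × ℝ →L[ℝ] ℝ × ℝ × ℝ) :
        ℝ × ℝ × ℝ →ₗ[ℝ] ℝ × ℝ × ℝ))).coeff 0 = -(2 * KI * r) ∧
    -(2 * KI * r) < 0 ∧
    LinearMap.det ((fderiv ℝ f χu : ℝ × ℝ × ℝ →L[ℝ] ℝ × ℝ × ℝ) :
        ℝ × ℝ × ℝ →ₗ[ℝ] ℝ × ℝ × ℝ) = 2 * KI * r :=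
  boost_pi_min_current_charpoly_coeff_general d1 d2 ystar KP KI u0 hd1 hy hcond hKI r hr f hf χu hχu
end

section
/- Let d1 > 0, d2 > 0, y⋆ > 0 with d1·d2 < 1/(4·y⋆²), KP ≥ 0, KI > 0, u0 ∈ ℝ, r := (1/2)·√(1 - 4·d1·d2·y⋆²), and let χ̄^s be the maximal-current equilibrium of the PI closed-loop vector field f. Then the coefficients of the characteristic polynomial λ³ + a2·λ² + a1·λ + a0 of the Jacobian ∇f(χ̄^s) are a0 = 2·KI·r, a1 = (1/(4·d1·y⋆²))·(4·d1²·d2·y⋆² + 8·r·KP·y⋆²·d1 + 4·(r - 1/2)²·d1 + 4·KI·y⋆²·(1/2 + r)), a2 = (KP/d1)·(1/2 + r) + d1 + d2, and all three are strictly positive. -/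
/-!
In the coordinates `ℝ × ℝ × ℝ ≅ Fin 3 → ℝ` the derivative of the closed loop at `χ` is the
matrix `piJacobian`, whose characteristic polynomial has coefficients `-det`, the sum of the
principal `2 × 2` minors and `-trace`. At `χ̄ˢ` the third coordinate is chosen so that the
first component of `f` vanishes, i.e. `y⋆ · u(χ̄ˢ) = 1 - d1 · x̄ = 1/2 - r`; substituting this
and `d1 · x̄ = 1/2 + r` gives the stated coefficients. They are positive because
`d1 · d2 < 1 / (4 y⋆²)` makes `r > 0`.
-/

open Polynomial Matrix

@[simps]
def prodProdEquivFinThree (R : Type*) [CommSemiring R] : (R × R × R) ≃ₗ[R] (Fin 3 → R) where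
  toFun v := ![v.1, v.2.1, v.2.2]
  invFun w := (w 0, w 1, w 2)
  map_add' x y := by ext i; fin_cases i <;> rfl
  map_smul' c x := by ext i; fin_cases i <;> rfl
  left_inv x := rfl
  right_inv w := by ext i; fin_cases i <;> rfl

theorem LinearMap.charpoly_eq_of_mulVec {R M ι : Type*} [CommRing R] [AddCommGroup M]
    [Module R M] [Module.Free R M] [Module.Finite R M] [Fintype ι] [DecidableEq ι]
    (e : M ≃ₗ[R] (ι → R)) (T : Module.End R M) (A : Matrix ι ι R)
    (hT : ∀ v, e (T v) = A *ᵥ e v) : T.charpoly = A.charpoly := by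
  have hconj : e.conj T = Matrix.toLin' A := by
    refine LinearMap.ext fun w => ?_
    simp [LinearEquiv.conj_apply, hT]
  rw [← e.charpoly_conj T, hconj, Matrix.charpoly_toLin']

theorem Matrix.charpoly_fin_three {R : Type*} [CommRing R] (M : Matrix (Fin 3) (Fin 3) R) :
    M.charpoly = X ^ 3 - C M.trace * X ^ 2
      + C (M 0 0 * M 1 1 - M 0 1 * M 1 0 + M 0 0 * M 2 2 - M 0 2 * M 2 0
          + M 1 1 * M 2 2 - M 1 2 * M 2 1) * X - C M.det := by
  rw [Matrix.charpoly, Matrix.det_fin_three, Matrix.det_fin_three, Matrix.trace_fin_three]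
  simp only [charmatrix_apply, Matrix.diagonal_apply, Fin.reduceEq, if_true, if_false,
    map_add, map_sub, map_mul]
  ring

section PIClosedLoop

variable (d1 d2 ystar KP KI u0 : ℝ)

def piControl (χ : ℝ × ℝ × ℝ) : ℝ := u0 + KI * χ.2.2 + KP * (ystar - χ.2.1)

def piClosedLoop (χ : ℝ × ℝ × ℝ) : ℝ × ℝ × ℝ :=
  (-d1 * χ.1 + 1 - piControl ystar KP KI u0 χ * χ.2.1,
   -d2 * χ.2.1 + piControl ystar KP KI u0 χ * χ.1,
   ystar - χ.2.1)

def piJacobian (χ : ℝ × ℝ × ℝ) : Matrix (Fin 3) (Fin 3) ℝ :=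
  !![-d1, KP * χ.2.1 - piControl ystar KP KI u0 χ, -(KI * χ.2.1);
     piControl ystar KP KI u0 χ, -d2 - KP * χ.1, KI * χ.1;
     0, -1, 0]

theorem fderiv_piClosedLoop_eq_piJacobian_mulVec (χ v : ℝ × ℝ × ℝ) :
    prodProdEquivFinThree ℝ (fderiv ℝ (piClosedLoop d1 d2 ystar KP KI u0) χ v) =
      piJacobian d1 d2 ystar KP KI u0 χ *ᵥ prodProdEquivFinThree ℝ v := by
  have hx : HasFDerivAt (fun χ : ℝ × ℝ × ℝ => χ.1) (ContinuousLinearMap.fst ℝ ℝ (ℝ × ℝ)) χ :=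
    hasFDerivAt_fst
  have hy : HasFDerivAt (fun χ : ℝ × ℝ × ℝ => χ.2.1)
      ((ContinuousLinearMap.fst ℝ ℝ ℝ).comp (ContinuousLinearMap.snd ℝ ℝ (ℝ × ℝ))) χ :=
    hasFDerivAt_snd.fst
  have hz : HasFDerivAt (fun χ : ℝ × ℝ × ℝ => χ.2.2)
      ((ContinuousLinearMap.snd ℝ ℝ ℝ).comp (ContinuousLinearMap.snd ℝ ℝ (ℝ × ℝ))) χ :=
    hasFDerivAt_snd.snd
  have hu : HasFDerivAt (piControl ystar KP KI u0) _ χ :=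
    ((hasFDerivAt_const u0 χ).add (hz.const_mul KI)).add
      (((hasFDerivAt_const ystar χ).sub hy).const_mul KP)
  have hf : HasFDerivAt (piClosedLoop d1 d2 ystar KP KI u0) _ χ :=
    (((hx.const_mul (-d1)).add_const 1).sub (hu.mul hy)).prodMk
      (((hy.const_mul (-d2)).add (hu.mul hx)).prodMk ((hasFDerivAt_const ystar χ).sub hy))
  rw [hf.fderiv]
  ext i
  fin_cases i <;>
    simp only [piJacobian, Matrix.mulVec, dotProduct, Fin.sum_univ_three, Matrix.of_apply,
      Matrix.cons_val', Matrix.cons_val_zero, Matrix.cons_val_one, Matrix.cons_val,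
      Matrix.cons_val_fin_one, prodProdEquivFinThree_apply, ContinuousLinearMap.prod_apply,
      _root_.add_apply, _root_.sub_apply, _root_.smul_apply,
      _root_.zero_apply, ContinuousLinearMap.comp_apply, ContinuousLinearMap.coe_fst',
      ContinuousLinearMap.coe_snd', smul_eq_mul, Fin.isValue, Fin.zero_eta, Fin.mk_one, Fin.reduceFinMk] <;>
    ring

theorem charpoly_fderiv_piClosedLoop (χ : ℝ × ℝ × ℝ) :
    (fderiv ℝ (piClosedLoop d1 d2 ystar KP KI u0) χ : Module.End ℝ (ℝ × ℝ × ℝ)).charpoly =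
      (piJacobian d1 d2 ystar KP KI u0 χ).charpoly :=
  LinearMap.charpoly_eq_of_mulVec _ _ _ (fderiv_piClosedLoop_eq_piJacobian_mulVec d1 d2 ystar KP KI u0 χ)

theorem piJacobian_charpoly_coeffs (χ : ℝ × ℝ × ℝ) :
    (piJacobian d1 d2 ystar KP KI u0 χ).charpoly.coeff 0 =
        KI * (d1 * χ.1 - χ.2.1 * piControl ystar KP KI u0 χ) ∧
      (piJacobian d1 d2 ystar KP KI u0 χ).charpoly.coeff 1 =
        d1 * d2 + KP * (d1 * χ.1 - χ.2.1 * piControl ystar KP KI u0 χ)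
          + piControl ystar KP KI u0 χ ^ 2 + KI * χ.1 ∧
      (piJacobian d1 d2 ystar KP KI u0 χ).charpoly.coeff 2 = d1 + d2 + KP * χ.1 := by
  simp only [Matrix.charpoly_fin_three, Matrix.trace_fin_three, Matrix.det_fin_three, piJacobian,
    Matrix.of_apply, Matrix.cons_val', Matrix.cons_val_zero, Matrix.cons_val_one, Matrix.cons_val,
    Matrix.cons_val_fin_one, coeff_add, coeff_sub, coeff_C_mul, coeff_X_pow, coeff_C, coeff_X,
    Nat.reduceEqDiff, ↓reduceIte]
  exact ⟨by ring, by ring, by ring⟩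

end PIClosedLoop

/-- at the maximal-current equilibrium the coefficients of the
characteristic polynomial λ³ + a2·λ² + a1·λ + a0 of the Jacobian are as stated and
all three are strictly positive. -/
theorem boost_pi_max_current_charpoly_coeffs
    (d1 d2 ystar KP KI u0 : ℝ) (hd1 : 0 < d1) (hd2 : 0 < d2) (hy : 0 < ystar)
    (hcond : d1 * d2 < 1 / (4 * ystar ^ 2)) (hKP : 0 ≤ KP) (hKI : 0 < KI)
    (r : ℝ) (hr : r = (1 / 2) * Real.sqrt (1 - 4 * d1 * d2 * ystar ^ 2))
    (f : ℝ × ℝ × ℝ → ℝ × ℝ × ℝ)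
    (hf : ∀ χ : ℝ × ℝ × ℝ,
      f χ = (-d1 * χ.1 + 1 - (u0 + KI * χ.2.2 + KP * (ystar - χ.2.1)) * χ.2.1,
             -d2 * χ.2.1 + (u0 + KI * χ.2.2 + KP * (ystar - χ.2.1)) * χ.1,
             ystar - χ.2.1))
    (χs : ℝ × ℝ × ℝ)
    (hχs : χs = ((1 / (2 * d1)) * (1 + 2 * r), ystar,
      (1 - d1 * ((1 / (2 * d1)) * (1 + 2 * r)) - u0 * ystar) / (KI * ystar)))
    (a0 a1 a2 : ℝ)
    (ha0 : a0 = 2 * KI * r)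
    (ha1 : a1 = (1 / (4 * d1 * ystar ^ 2)) *
      (4 * d1 ^ 2 * d2 * ystar ^ 2 + 8 * r * KP * ystar ^ 2 * d1 +
        4 * (r - 1 / 2) ^ 2 * d1 + 4 * KI * ystar ^ 2 * (1 / 2 + r)))
    (ha2 : a2 = (KP / d1) * (1 / 2 + r) + d1 + d2) :
    (LinearMap.charpoly (((fderiv ℝ f χs : ℝ × ℝ × ℝ →L[ℝ] ℝ × ℝ × ℝ) :
        ℝ × ℝ × ℝ →ₗ[ℝ] ℝ × ℝ × ℝ))).coeff 0 = a0 ∧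
    (LinearMap.charpoly (((fderiv ℝ f χs : ℝ × ℝ × ℝ →L[ℝ] ℝ × ℝ × ℝ) :
        ℝ × ℝ × ℝ →ₗ[ℝ] ℝ × ℝ × ℝ))).coeff 1 = a1 ∧
    (LinearMap.charpoly (((fderiv ℝ f χs : ℝ × ℝ × ℝ →L[ℝ] ℝ × ℝ × ℝ) :
        ℝ × ℝ × ℝ →ₗ[ℝ] ℝ × ℝ × ℝ))).coeff 2 = a2 ∧
    0 < a0 ∧ 0 < a1 ∧ 0 < a2 := by
  obtain rfl : f = piClosedLoop d1 d2 ystar KP KI u0 := funext hf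
  have hr_pos : 0 < r := by
    rw [lt_div_iff₀ (by positivity)] at hcond
    rw [hr]
    exact mul_pos one_half_pos (Real.sqrt_pos.2 (by linarith))
  have hu : piControl ystar KP KI u0 χs = (1 / 2 - r) / ystar := by
    rw [hχs, piControl]
    field_simp
    ring
  obtain ⟨hc0, hc1, hc2⟩ := piJacobian_charpoly_coeffs d1 d2 ystar KP KI u0 χs
  rw [charpoly_fderiv_piClosedLoop, hc0, hc1, hc2, hu]
  subst hχs ha0 ha1 ha2
  refine ⟨?_, ?_, ?_, by positivity, by positivity, by positivity⟩ <;> field_simp <;> ring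
end
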